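/- arXiv:1101.5957 — 4 statements merged into one kernel-verified Lean document; each statement's English description precedes it below -/
import Mathlib

section
/- (Characterization of language equivalence.) For knowledge sets P1 P2 : Set α, the communication-model languages coincide, L1(P1,P2) = L2(P1,P2), if and only if P1 = P2. -/
/-- Communication-model language of Side A. -/
def L1 {α : Type*} (P1 P2 : Set α) : Set (List (α ⊕ Bool)) :=
  {s | ∃ a ∈ P1, ∃ w : List Bool, s = [Sum.inl a] ++ w.map Sum.inr} ∪
  {s | ∃ a ∈ P2, ∃ w : List Bool, s = [Sum.inl a, Sum.inr true] ++ w.map Sum.inr}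

/-- Communication-model language of Side B. -/
def L2 {α : Type*} (P1 P2 : Set α) : Set (List (α ⊕ Bool)) :=
  {s | ∃ a ∈ P2, ∃ w : List Bool, s = [Sum.inl a] ++ w.map Sum.inr} ∪
  {s | ∃ a ∈ P1, ∃ w : List Bool, s = [Sum.inl a, Sum.inr false] ++ w.map Sum.inr}

/-- A basic fact `a` is common knowledge w.r.t. languages `K1`, `K2`. -/
def CommonKnowledge {α : Type*} (a : α) (K1 K2 : Set (List (α ⊕ Bool))) : Prop :=
  ∀ w : List Bool,
    [Sum.inl a] ++ w.map Sum.inr ∈ K1 ∧ [Sum.inl a] ++ w.map Sum.inr ∈ K2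

/-- Characterization of language equivalence. -/
theorem lang_eq_iff_knowledge_eq {α : Type*} (P1 P2 : Set α) :
    L1 P1 P2 = L2 P1 P2 ↔ P1 = P2 := by
  constructor
  · intro h
    ext a
    constructor
    · intro ha
      have h1 : [Sum.inl a] ∈ L1 P1 P2 := Or.inl ⟨a, ha, [], rfl⟩
      rw [h] at h1
      rcases h1 with ⟨b, hb, w, hw⟩ | ⟨b, hb, w, hw⟩
      · cases w with
        | nil => simp at hw; rwa [hw]
        | cons x xs => simp at hw
      · simp at hw
    · intro ha
      have h1 : [Sum.inl a] ∈ L2 P1 P2 := Or.inl ⟨a, ha, [], rfl⟩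
      rw [← h] at h1
      rcases h1 with ⟨b, hb, w, hw⟩ | ⟨b, hb, w, hw⟩
      · cases w with
        | nil => simp at hw; rwa [hw]
        | cons x xs => simp at hw
      · simp at hw
  · rintro rfl
    ext s
    constructor
    · rintro (⟨a, ha, w, rfl⟩ | ⟨a, ha, w, rfl⟩)
      · exact Or.inl ⟨a, ha, w, rfl⟩
      · exact Or.inl ⟨a, ha, true :: w, rfl⟩
    · rintro (⟨a, ha, w, rfl⟩ | ⟨a, ha, w, rfl⟩)
      · exact Or.inl ⟨a, ha, w, rfl⟩
      · exact Or.inl ⟨a, ha, false :: w, rfl⟩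
end

section
/- (Characterization of common knowledge of basic facts in the communication model.) For knowledge sets P1 P2 : Set α and a basic fact a : α, a is common knowledge with respect to the communication-model languages L1(P1,P2) and L2(P1,P2) if and only if a ∈ P1 ∩ P2. -/
/-- Characterization of common knowledge of basic facts. -/
theorem commonKnowledge_iff_mem_inter {α : Type*} (P1 P2 : Set α) (a : α) :
    CommonKnowledge a (L1 P1 P2) (L2 P1 P2) ↔ a ∈ P1 ∩ P2 := by
  constructor
  · intro h
    obtain ⟨h1, h2⟩ := h []
    constructor
    · rcases h1 with ⟨b, hb, w, hw⟩ | ⟨b, hb, w, hw⟩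
      · simp at hw; rcases hw with ⟨rfl, _⟩; exact hb
      · simp at hw
    · rcases h2 with ⟨b, hb, w, hw⟩ | ⟨b, hb, w, hw⟩
      · simp at hw; rcases hw with ⟨rfl, _⟩; exact hb
      · simp at hw
  · rintro ⟨h1, h2⟩ w
    exact ⟨Or.inl ⟨a, h1, w, rfl⟩, Or.inl ⟨a, h2, w, rfl⟩⟩
end

section
/- (Theorem 1, common knowledge of basic facts cannot be obtained.) For knowledge sets P1 P2 : Set α and a basic fact a : α with a ∉ P1 ∩ P2, the fact a is not common knowledge with respect to the communication-model languages L1(P1,P2) and L2(P1,P2); that is, communication (Rule 2) never creates common knowledge of a basic fact that was not already known by both sides. -/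
/-- Theorem 1: common knowledge of basic facts cannot be obtained. -/
theorem commonKnowledge_not_obtained {α : Type*} (P1 P2 : Set α) (a : α)
    (h : a ∉ P1 ∩ P2) : ¬ CommonKnowledge a (L1 P1 P2) (L2 P1 P2) := by
  intro hck
  obtain ⟨h1, h2⟩ := hck []
  apply h
  constructor
  · rcases h1 with ⟨b, hb, w, hw⟩ | ⟨b, hb, w, hw⟩
    · simp at hw; rcases hw with ⟨h1, h2⟩; cases w <;> simp_all
    · simp at hw
  · rcases h2 with ⟨b, hb, w, hw⟩ | ⟨b, hb, w, hw⟩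
    · simp at hw; rcases hw with ⟨h1, h2⟩; cases w <;> simp_all
    · simp at hw
end

section
/- (Theorem 3, condition for success of a project regardless of cost in the communication model.) Let P P1 P2 : Set α with P1 ⊆ P and P2 ⊆ P (each side's knowledge of basic facts is drawn from the final specification P). If P ⊆ P1 and P ⊆ P2, then P1 = P, P2 = P, and the communication-model languages coincide: L1(P1,P2) = L2(P1,P2). -/
/-- Theorem 3: success of a project regardless of cost in the communication model. -/
theorem success_communication_model {α : Type*} (P P1 P2 : Set α)
    (h1 : P1 ⊆ P) (h2 : P2 ⊆ P) (hc1 : P ⊆ P1) (hc2 : P ⊆ P2) :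
    P1 = P ∧ P2 = P ∧ L1 P1 P2 = L2 P1 P2 := by
  have e1 : P1 = P := Set.Subset.antisymm h1 hc1
  have e2 : P2 = P := Set.Subset.antisymm h2 hc2
  rw [e1, e2]
  refine ⟨rfl, rfl, ?_⟩
  have key : ∀ Q : Set (List (α ⊕ Bool)),
      (∀ s ∈ Q, ∃ a ∈ P, ∃ w : List Bool, s = [Sum.inl a] ++ w.map Sum.inr) →
      {s | ∃ a ∈ P, ∃ w : List Bool, s = [Sum.inl a] ++ w.map Sum.inr} ∪ Q =
      {s | ∃ a ∈ P, ∃ w : List Bool, s = [Sum.inl a] ++ w.map Sum.inr} := by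
    intro Q hQ
    apply Set.union_eq_self_of_subset_right
    intro s hs; exact hQ s hs
  unfold L1 L2
  rw [key _ (by rintro s ⟨a, ha, w, rfl⟩; exact ⟨a, ha, true :: w, rfl⟩),
      key _ (by rintro s ⟨a, ha, w, rfl⟩; exact ⟨a, ha, false :: w, rfl⟩)]
end
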